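/- arXiv:1106.0088 — 4 statements merged into one kernel-verified Lean document; each statement's English description precedes it below -/
import Mathlib

section
/- Let X be a reflexive Banach space, let F ⊆ X be a closed, bounded, convex set with 0 in its interior, and let Ω, Ω_1, …, Ω_n (n ≥ 2) be nonempty closed convex subsets of X. If at least one of the sets Ω, Ω_1, …, Ω_n is bounded, then the generalized Heron problem admits an optimal solution, i.e., there exists x̄ ∈ Ω such that Σ_{i=1}^n T^F_{Ω_i}(x̄) ≤ Σ_{i=1}^n T^F_{Ω_i}(x) for all x ∈ Ω. -/
/-!
If `F` contains the ball of radius `r` about `0`, every minimal time function `T^F_Q` is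
`r⁻¹`-Lipschitz, and it is convex when `Q` is: both follow from `sF + tF = (s + t)F` for the convex
set `F`. So the sublevel sets of `T = ∑ i, T^F_{Ω_i}` are closed and convex, hence weakly closed,
i.e. `T` is weakly lower semicontinuous. If `Ω` or some `Ω_i` is bounded, so is
`Ω ∩ {T ≤ T x₀}`, since `T^F_{Ω_i} x` controls the distance from `x` to `Ω_i`. In a reflexive space
this closed bounded convex set is weakly compact (Banach–Alaoglu in the bidual), and `T` attains
its minimum on it.
-/

open Set Metric Bornology Pointwise

/-- The minimal time function `T^F_Q(x) = inf {t ≥ 0 : Q ∩ (x + tF) ≠ ∅}`. -/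
noncomputable def minTime {X : Type*} [NormedAddCommGroup X] [NormedSpace ℝ X]
    (F Q : Set X) (x : X) : ℝ :=
  sInf {t : ℝ | 0 ≤ t ∧ (Q ∩ ({x} + t • F)).Nonempty}

open Topology NNReal NormedSpace

lemma inter_singleton_add_nonempty_iff {G : Type*} [AddCommGroup G] {Q A : Set G} {x : G} :
    (Q ∩ ({x} + A)).Nonempty ↔ ∃ q ∈ Q, q - x ∈ A := by
  simp only [singleton_add, inter_nonempty, mem_image]
  constructor
  · rintro ⟨_, hq, a, ha, rfl⟩
    exact ⟨_, hq, by rwa [add_sub_cancel_left]⟩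
  · rintro ⟨q, hq, hqx⟩
    exact ⟨q, hq, q - x, hqx, add_sub_cancel x q⟩

lemma norm_le_mul_of_mem_smul {E : Type*} [SeminormedAddCommGroup E] [NormedSpace ℝ E]
    {F : Set E} {R t : ℝ} (hR : ∀ f ∈ F, ‖f‖ ≤ R) (ht : 0 ≤ t) {v : E} (hv : v ∈ t • F) :
    ‖v‖ ≤ t * R := by
  obtain ⟨f, hf, rfl⟩ := hv
  rw [norm_smul, Real.norm_of_nonneg ht]
  exact mul_le_mul_of_nonneg_left (hR f hf) ht

section MinTime

variable {X : Type*} [NormedAddCommGroup X] [NormedSpace ℝ X] {F Q : Set X}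

lemma minTime_nonneg (x : X) : 0 ≤ minTime F Q x :=
  Real.sInf_nonneg fun _ ht => ht.1

lemma minTime_le {x q : X} {t : ℝ} (ht : 0 ≤ t) (hq : q ∈ Q) (hqx : q - x ∈ t • F) :
    minTime F Q x ≤ t :=
  csInf_le ⟨0, fun _ hs => hs.1⟩ ⟨ht, inter_singleton_add_nonempty_iff.2 ⟨q, hq, hqx⟩⟩

lemma exists_lt_minTime_add (hF : F ∈ 𝓝 0) (hQ : Q.Nonempty) (x : X) {ε : ℝ} (hε : 0 < ε) :
    ∃ t, 0 ≤ t ∧ t < minTime F Q x + ε ∧ ∃ q ∈ Q, q - x ∈ t • F := by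
  obtain ⟨q, hq⟩ := hQ
  obtain ⟨s, hs, hqx⟩ := (absorbent_nhds_zero (𝕜 := ℝ) hF (q - x)).exists_pos
  have hne : {t : ℝ | 0 ≤ t ∧ (Q ∩ ({x} + t • F)).Nonempty}.Nonempty :=
    ⟨s, hs.le, inter_singleton_add_nonempty_iff.2
      ⟨q, hq, hqx s (Real.norm_of_nonneg hs.le).ge rfl⟩⟩
  obtain ⟨t, ⟨ht, hmem⟩, hlt⟩ := Real.lt_sInf_add_pos hne hε
  exact ⟨t, ht, hlt, inter_singleton_add_nonempty_iff.1 hmem⟩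

lemma minTime_le_minTime_add (hFconv : Convex ℝ F) {r : ℝ≥0} (hr : 0 < r)
    (hrF : ball 0 r ⊆ F) (hQ : Q.Nonempty) (x y : X) :
    minTime F Q x ≤ minTime F Q y + r⁻¹ * dist x y := by
  refine le_of_forall_pos_lt_add fun ε hε => ?_
  have hr' : (0 : ℝ) < r := hr
  obtain ⟨t, ht, hlt, q, hq, hqy⟩ :=
    exists_lt_minTime_add (Filter.mem_of_superset (ball_mem_nhds 0 hr') hrF) hQ y (half_pos hε)
  set s : ℝ := r⁻¹ * dist x y + ε / 2
  have hs : 0 < s := by positivity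
  have hyx : y - x ∈ s • F := by
    refine smul_set_mono hrF ?_
    rw [_root_.smul_ball hs.ne', smul_zero, mem_ball_zero_iff, ← dist_eq_norm, dist_comm,
      Real.norm_of_nonneg hs.le]
    calc dist x y < dist x y + ε / 2 * r := by simp only [lt_add_iff_pos_right]; positivity
      _ = s * r := by simp only [s, NNReal.coe_inv]; field_simp
  have hqx : q - x ∈ (s + t) • F := by
    rw [hFconv.add_smul hs.le ht]
    simpa using add_mem_add hyx hqy
  calc minTime F Q x ≤ s + t := minTime_le (by positivity) hq hqx
    _ < minTime F Q y + r⁻¹ * dist x y + ε := by simp only [s]; linarith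

lemma lipschitzWith_minTime (hFconv : Convex ℝ F) {r : ℝ≥0} (hr : 0 < r) (hrF : ball 0 r ⊆ F)
    (hQ : Q.Nonempty) : LipschitzWith r⁻¹ (minTime F Q) :=
  LipschitzWith.of_le_add_mul _ fun x y => by
    simpa using minTime_le_minTime_add hFconv hr hrF hQ x y

lemma continuous_minTime (hFconv : Convex ℝ F) (hF : F ∈ 𝓝 0) (hQ : Q.Nonempty) :
    Continuous (minTime F Q) := by
  obtain ⟨r, hr, hrF⟩ := Metric.mem_nhds_iff.1 hF
  lift r to ℝ≥0 using hr.le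
  exact (lipschitzWith_minTime hFconv hr hrF hQ).continuous

lemma convexOn_minTime (hFconv : Convex ℝ F) (hF : F ∈ 𝓝 0) (hQconv : Convex ℝ Q)
    (hQ : Q.Nonempty) : ConvexOn ℝ univ (minTime F Q) := by
  refine ⟨convex_univ, fun x _ y _ a b ha hb hab => le_of_forall_pos_le_add fun ε hε => ?_⟩
  obtain ⟨t₁, ht₁, hlt₁, q₁, hq₁, hqx⟩ := exists_lt_minTime_add hF hQ x hε
  obtain ⟨t₂, ht₂, hlt₂, q₂, hq₂, hqy⟩ := exists_lt_minTime_add hF hQ y hε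
  have hmem : a • q₁ + b • q₂ - (a • x + b • y) ∈ (a * t₁ + b * t₂) • F := by
    rw [hFconv.add_smul (by positivity) (by positivity), mul_smul, mul_smul]
    convert add_mem_add (smul_mem_smul_set (a := a) hqx) (smul_mem_smul_set (a := b) hqy)
      using 1
    module
  calc minTime F Q (a • x + b • y) ≤ a * t₁ + b * t₂ :=
        minTime_le (by positivity) (hQconv hq₁ hq₂ ha hb hab) hmem
    _ ≤ a * (minTime F Q x + ε) + b * (minTime F Q y + ε) := by gcongr
    _ = a • minTime F Q x + b • minTime F Q y + ε := by
        simp only [smul_eq_mul]; linear_combination ε * hab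

lemma isBounded_setOf_minTime_le (hFb : IsBounded F) (hF : F ∈ 𝓝 0) (hQb : IsBounded Q)
    (hQ : Q.Nonempty) (c : ℝ) : IsBounded {x | minTime F Q x ≤ c} := by
  obtain ⟨R, hR⟩ := hFb.exists_norm_le
  have hR0 : 0 ≤ R := (norm_nonneg _).trans (hR 0 (mem_of_mem_nhds hF))
  refine (hQb.cthickening (δ := (c + 1) * R)).subset fun x hx => ?_
  obtain ⟨t, ht, hlt, q, hq, hqx⟩ := exists_lt_minTime_add hF hQ x one_pos
  refine mem_cthickening_of_dist_le x q _ Q hq ?_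
  rw [dist_comm, dist_eq_norm]
  calc ‖q - x‖ ≤ t * R := norm_le_mul_of_mem_smul hR ht hqx
    _ ≤ (c + 1) * R := by gcongr; linarith [hx.out]

end MinTime

section Reflexive

variable {X : Type*} [NormedAddCommGroup X] [NormedSpace ℝ X]

lemma Convex.isClosed_toWeakSpace_image {S : Set X} (hSconv : Convex ℝ S) (hSc : IsClosed S) :
    IsClosed (toWeakSpace ℝ X '' S) := by
  rw [← hSc.closure_eq, hSconv.toWeakSpace_closure ℝ]
  exact isClosed_closure

lemma isCompact_toWeakSpace_image (hrefl : Function.Surjective (inclusionInDoubleDual ℝ X))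
    {S : Set X} (hSc : IsClosed S) (hSconv : Convex ℝ S) (hSb : IsBounded S) :
    IsCompact (toWeakSpace ℝ X '' S) := by
  have hcl := hSconv.isClosed_toWeakSpace_image hSc
  rw [← hcl.closure_eq]
  refine isCompact_closure_of_isBounded ℝ X _ ?_ fun ψ _ => ?_
  · rwa [preimage_image_eq _ (toWeakSpace ℝ X).injective]
  · obtain ⟨x, hx⟩ := hrefl (WeakDual.toStrongDual ψ)
    exact ⟨toWeakSpace ℝ X x, hx⟩

lemma ConvexOn.lowerSemicontinuous_comp_toWeakSpace_symm {f : X → ℝ}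
    (hfconv : ConvexOn ℝ univ f) (hf : LowerSemicontinuous f) :
    LowerSemicontinuous (f ∘ (toWeakSpace ℝ X).symm) := by
  refine lowerSemicontinuous_iff_isClosed_preimage.2 fun c => ?_
  rw [preimage_comp, ← LinearEquiv.image_eq_preimage_symm]
  have hconv : Convex ℝ {x | f x ≤ c} := by simpa using hfconv.convex_le c
  exact hconv.isClosed_toWeakSpace_image (hf.isClosed_preimage c)

lemma ConvexOn.exists_isMinOn_of_isBounded
    (hrefl : Function.Surjective (inclusionInDoubleDual ℝ X)) {S : Set X} (hSne : S.Nonempty)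
    (hSc : IsClosed S) (hSconv : Convex ℝ S) (hSb : IsBounded S) {f : X → ℝ}
    (hfconv : ConvexOn ℝ univ f) (hf : LowerSemicontinuous f) :
    ∃ a ∈ S, IsMinOn f S a := by
  obtain ⟨_, ⟨a, ha, rfl⟩, hmin⟩ :=
    ((hfconv.lowerSemicontinuous_comp_toWeakSpace_symm hf).lowerSemicontinuousOn _).exists_isMinOn
      (hSne.image _) (isCompact_toWeakSpace_image hrefl hSc hSconv hSb)
  refine ⟨a, ha, fun x hx => ?_⟩
  simpa using hmin (mem_image_of_mem _ hx)

lemma ConvexOn.exists_isMinOn_of_isBounded_sublevel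
    (hrefl : Function.Surjective (inclusionInDoubleDual ℝ X)) {S : Set X} {x₀ : X}
    (hx₀ : x₀ ∈ S) (hSc : IsClosed S) (hSconv : Convex ℝ S) {f : X → ℝ}
    (hfconv : ConvexOn ℝ univ f) (hf : LowerSemicontinuous f)
    (hb : IsBounded (S ∩ {x | f x ≤ f x₀})) :
    ∃ a ∈ S, IsMinOn f S a := by
  have hconv : Convex ℝ {x | f x ≤ f x₀} := by simpa using hfconv.convex_le (f x₀)
  obtain ⟨a, ha, hmin⟩ := hfconv.exists_isMinOn_of_isBounded (S := S ∩ {x | f x ≤ f x₀}) hrefl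
    ⟨x₀, hx₀, le_refl (f x₀)⟩
    (hSc.inter (hf.isClosed_preimage (f x₀))) (hSconv.inter hconv) hb hf
  refine ⟨a, ha.1, fun x hx => ?_⟩
  rcases le_total (f x) (f x₀) with hle | hge
  · exact hmin ⟨hx, hle⟩
  · exact (hmin ⟨hx₀, le_refl (f x₀)⟩).trans hge

end Reflexive

theorem heron_exists_of_reflexive_general
    {X : Type*} [NormedAddCommGroup X] [NormedSpace ℝ X]
    (hrefl : Function.Surjective (NormedSpace.inclusionInDoubleDual ℝ X))
    (F : Set X) (hFb : IsBounded F) (hFconv : Convex ℝ F)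
    (hF0 : (0 : X) ∈ interior F)
    (n : ℕ)
    (Ω : Set X) (hΩne : Ω.Nonempty) (hΩc : IsClosed Ω) (hΩconv : Convex ℝ Ω)
    (Ωi : Fin n → Set X) (hΩine : ∀ i, (Ωi i).Nonempty)
    (hΩiconv : ∀ i, Convex ℝ (Ωi i))
    (hbdd : IsBounded Ω ∨ ∃ i, IsBounded (Ωi i)) :
    ∃ xbar ∈ Ω, ∀ x ∈ Ω, ∑ i, minTime F (Ωi i) xbar ≤ ∑ i, minTime F (Ωi i) x := by
  have hF : F ∈ 𝓝 0 := mem_interior_iff_mem_nhds.1 hF0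
  set T : X → ℝ := ∑ i, minTime F (Ωi i) with hT
  have hTcont : Continuous T := Finset.sum_induction _ Continuous (fun _ _ => Continuous.add)
    continuous_zero fun i _ => continuous_minTime hFconv hF (hΩine i)
  have hTconv : ConvexOn ℝ univ T := Finset.sum_induction _ (ConvexOn ℝ univ)
    (fun _ _ => ConvexOn.add) (convexOn_const 0 convex_univ)
    fun i _ => convexOn_minTime hFconv hF (hΩiconv i) (hΩine i)
  obtain ⟨x₀, hx₀⟩ := hΩne
  have hsublevel : IsBounded (Ω ∩ {x | T x ≤ T x₀}) := by
    rcases hbdd with hΩb | ⟨i, hi⟩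
    · exact hΩb.subset inter_subset_left
    · refine (isBounded_setOf_minTime_le hFb hF hi (hΩine i) (T x₀)).subset fun x hx => ?_
      have hle : minTime F (Ωi i) x ≤ T x := by
        simpa [hT] using Finset.single_le_sum
          (fun j _ => minTime_nonneg (F := F) (Q := Ωi j) x) (Finset.mem_univ i)
      exact hle.trans hx.2
  simpa [hT, isMinOn_iff] using hTconv.exists_isMinOn_of_isBounded_sublevel hrefl hx₀ hΩc hΩconv
    hTcont.lowerSemicontinuous hsublevel

/-- Existence of optimal solutions to the generalized Heron problem in a reflexive
Banach space with convex data when one of the sets `Ω, Ω_1, …, Ω_n` is bounded.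
Reflexivity is expressed as surjectivity of the canonical embedding into the double dual. -/
theorem heron_exists_of_reflexive
    {X : Type*} [NormedAddCommGroup X] [NormedSpace ℝ X] [CompleteSpace X]
    (hrefl : Function.Surjective (NormedSpace.inclusionInDoubleDual ℝ X))
    (F : Set X) (hFc : IsClosed F) (hFb : IsBounded F) (hFconv : Convex ℝ F)
    (hF0 : (0 : X) ∈ interior F)
    (n : ℕ) (hn : 2 ≤ n)
    (Ω : Set X) (hΩne : Ω.Nonempty) (hΩc : IsClosed Ω) (hΩconv : Convex ℝ Ω)
    (Ωi : Fin n → Set X) (hΩine : ∀ i, (Ωi i).Nonempty) (hΩic : ∀ i, IsClosed (Ωi i))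
    (hΩiconv : ∀ i, Convex ℝ (Ωi i))
    (hbdd : IsBounded Ω ∨ ∃ i, IsBounded (Ωi i)) :
    ∃ xbar ∈ Ω, ∀ x ∈ Ω, ∑ i, minTime F (Ωi i) xbar ≤ ∑ i, minTime F (Ωi i) x :=
  heron_exists_of_reflexive_general hrefl F hFb hFconv hF0 n Ω hΩne hΩc hΩconv Ωi hΩine hΩiconv hbdd
end

section
/- Let X be a real Hilbert space and let Ω_1, Ω_2, Ω_3 be nonempty closed pairwise disjoint subsets of X. Let x̄ be a local optimal solution of the unconstrained problem: minimize Σ_{i=1}^3 d(x;Ω_i) over x ∈ X, and suppose that x̄ ∉ Ω_i and Π(x̄;Ω_i) ≠ ∅ for i = 1, 2, 3. Then each projection set Π(x̄;Ω_i) is a singleton {ω_i}, and the unit vectors a_i := (x̄ − ω_i)/d(x̄;Ω_i) satisfy ⟨a_i, a_j⟩ = −1/2 whenever i ≠ j, i, j ∈ {1,2,3}. -/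
/-!
Replacing each distance function `d(·; Ωᵢ)` by the distance `‖· - ωᵢ‖` to a chosen
projection `ωᵢ ∈ Π(x̄; Ωᵢ)` gives a majorant that agrees with the objective at `x̄`, so `x̄`
is still a local minimizer. The majorant is differentiable at `x̄ ∉ Ωᵢ`, so Fermat's rule
says that the unit vectors `aᵢ = (x̄ - ωᵢ) / d(x̄; Ωᵢ)` sum to zero. Since this holds for
every choice of projections, each `aᵢ`, hence each `ωᵢ`, is determined by the other two;
and three unit vectors summing to zero have pairwise inner products `-1/2`.
-/

open Set Metric
open scoped RealInnerProductSpace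

/-- The set of metric projections of `x` onto `Q`. -/
def projSet {X : Type*} [NormedAddCommGroup X] (Q : Set X) (x : X) : Set X :=
  {ω ∈ Q | ‖x - ω‖ = infDist x Q}

theorem IsLocalMin.of_le_of_eq {α β : Type*} [TopologicalSpace α] [Preorder β] {f g : α → β}
    {a : α} (hf : IsLocalMin f a) (hle : f ≤ g) (heq : g a = f a) : IsLocalMin g a :=
  hf.mono fun _ hy => heq.trans_le (hy.trans (hle _))

section ProjSet

variable {X : Type*} [NormedAddCommGroup X] {Q : Set X} {x ω : X}

theorem ne_of_mem_projSet (hx : x ∉ Q) (hω : ω ∈ projSet Q x) : x ≠ ω :=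
  fun h => hx (h ▸ hω.1)

theorem infDist_pos_of_mem_projSet (hx : x ∉ Q) (hω : ω ∈ projSet Q x) : 0 < infDist x Q :=
  hω.2 ▸ norm_pos_iff.2 (sub_ne_zero.2 (ne_of_mem_projSet hx hω))

variable [NormedSpace ℝ X]

theorem norm_inv_infDist_smul_sub (hx : x ∉ Q) (hω : ω ∈ projSet Q x) :
    ‖(infDist x Q)⁻¹ • (x - ω)‖ = 1 := by
  rw [norm_smul, norm_inv, Real.norm_of_nonneg infDist_nonneg, hω.2,
    inv_mul_cancel₀ (infDist_pos_of_mem_projSet hx hω).ne']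

theorem projSet_eq_singleton (hx : x ∉ Q) (hω : ω ∈ projSet Q x)
    (h : ∀ ω' ∈ projSet Q x, (infDist x Q)⁻¹ • (x - ω') = (infDist x Q)⁻¹ • (x - ω)) :
    projSet Q x = {ω} :=
  eq_singleton_iff_unique_mem.2 ⟨hω, fun ω' hω' => sub_right_injective <|
    smul_right_injective X (inv_ne_zero (infDist_pos_of_mem_projSet hx hω).ne') (h ω' hω')⟩

end ProjSet

section InnerProductSpace

variable {X : Type*} [NormedAddCommGroup X] [InnerProductSpace ℝ X]

theorem hasFDerivAt_norm_sub {ω x : X} (h : x ≠ ω) :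
    HasFDerivAt (fun y => ‖y - ω‖) (‖x - ω‖⁻¹ • innerSL ℝ (x - ω)) x := by
  have hpos : 0 < ‖x - ω‖ := norm_pos_iff.2 (sub_ne_zero.2 h)
  have hsq := (((hasFDerivAt_id x).sub_const ω).norm_sq).sqrt (by positivity)
  simp only [id, Real.sqrt_sq (norm_nonneg _)] at hsq
  convert hsq using 1
  ext v
  simp only [smul_apply, innerSL_apply_apply, ContinuousLinearMap.comp_apply,
    ContinuousLinearMap.id_apply, smul_eq_mul, nsmul_eq_mul, Nat.cast_ofNat]
  field_simp

variable {ι : Type*} {s : Finset ι} {ω : ι → X} {x : X}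

theorem IsLocalMin.sum_inv_norm_smul_sub_eq_zero
    (hmin : IsLocalMin (fun y => ∑ i ∈ s, ‖y - ω i‖) x) (hx : ∀ i ∈ s, x ≠ ω i) :
    ∑ i ∈ s, ‖x - ω i‖⁻¹ • (x - ω i) = 0 := by
  have hderiv := hmin.hasFDerivAt_eq_zero
    (HasFDerivAt.fun_sum fun i hi => hasFDerivAt_norm_sub (hx i hi))
  have hinner : ∀ v : X, ⟪∑ i ∈ s, ‖x - ω i‖⁻¹ • (x - ω i), v⟫ = 0 := fun v => by
    simpa [sum_inner, real_inner_smul_left, inner_sub_left] using DFunLike.congr_fun hderiv v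
  exact inner_self_eq_zero.1 (hinner _)

theorem IsLocalMin.sum_inv_infDist_smul_sub_eq_zero {Ω : ι → Set X}
    (hmin : IsLocalMin (fun y => ∑ i ∈ s, infDist y (Ω i)) x)
    (hx : ∀ i ∈ s, x ∉ Ω i) (hω : ∀ i ∈ s, ω i ∈ projSet (Ω i) x) :
    ∑ i ∈ s, (infDist x (Ω i))⁻¹ • (x - ω i) = 0 := by
  have hmajor : IsLocalMin (fun y => ∑ i ∈ s, ‖y - ω i‖) x :=
    hmin.of_le_of_eq
      (fun y => Finset.sum_le_sum fun i hi =>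
        dist_eq_norm y (ω i) ▸ infDist_le_dist_of_mem (hω i hi).1)
      (Finset.sum_congr rfl fun i hi => (hω i hi).2)
  rw [← hmajor.sum_inv_norm_smul_sub_eq_zero fun i hi => ne_of_mem_projSet (hx i hi) (hω i hi)]
  exact Finset.sum_congr rfl fun i hi => by rw [(hω i hi).2]

theorem inner_eq_neg_half_of_add_add_eq_zero {u v w : X} (hu : ‖u‖ = 1) (hv : ‖v‖ = 1)
    (hw : ‖w‖ = 1) (hsum : u + v + w = 0) : ⟪u, v⟫ = -(1 / 2 : ℝ) := by
  have hnorm := norm_add_sq_real u v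
  rw [eq_neg_of_add_eq_zero_right hsum, norm_neg] at hw
  rw [hw, hu, hv] at hnorm
  linarith

end InnerProductSpace

theorem fermatTorricelli_three_sets_out_case_general
    {X : Type*} [NormedAddCommGroup X] [InnerProductSpace ℝ X]
    (Ω1 Ω2 Ω3 : Set X)
    (xbar : X)
    (hloc : ∃ δ > (0 : ℝ), ∀ x : X, ‖x - xbar‖ < δ →
      infDist xbar Ω1 + infDist xbar Ω2 + infDist xbar Ω3 ≤
        infDist x Ω1 + infDist x Ω2 + infDist x Ω3)
    (hout1 : xbar ∉ Ω1) (hout2 : xbar ∉ Ω2) (hout3 : xbar ∉ Ω3)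
    (hproj1 : (projSet Ω1 xbar).Nonempty) (hproj2 : (projSet Ω2 xbar).Nonempty)
    (hproj3 : (projSet Ω3 xbar).Nonempty) :
    ∃ ω1 ω2 ω3 : X,
      projSet Ω1 xbar = {ω1} ∧ projSet Ω2 xbar = {ω2} ∧ projSet Ω3 xbar = {ω3} ∧
      ⟪(infDist xbar Ω1)⁻¹ • (xbar - ω1), (infDist xbar Ω2)⁻¹ • (xbar - ω2)⟫ = -(1 / 2 : ℝ) ∧
      ⟪(infDist xbar Ω1)⁻¹ • (xbar - ω1), (infDist xbar Ω3)⁻¹ • (xbar - ω3)⟫ = -(1 / 2 : ℝ) ∧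
      ⟪(infDist xbar Ω2)⁻¹ • (xbar - ω2), (infDist xbar Ω3)⁻¹ • (xbar - ω3)⟫ = -(1 / 2 : ℝ) := by
  obtain ⟨ω1, h1⟩ := hproj1
  obtain ⟨ω2, h2⟩ := hproj2
  obtain ⟨ω3, h3⟩ := hproj3
  have hmin : IsLocalMin (fun y => ∑ i, infDist y (![Ω1, Ω2, Ω3] i)) xbar := by
    obtain ⟨δ, hδ, hle⟩ := hloc
    refine eventually_nhds_iff.2 ⟨δ, hδ, fun y hy => ?_⟩
    simpa [Fin.sum_univ_three] using hle y (dist_eq_norm y xbar ▸ hy)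
  have hsum : ∀ {ω1' ω2' ω3'}, ω1' ∈ projSet Ω1 xbar → ω2' ∈ projSet Ω2 xbar →
      ω3' ∈ projSet Ω3 xbar →
        (infDist xbar Ω1)⁻¹ • (xbar - ω1') + (infDist xbar Ω2)⁻¹ • (xbar - ω2') +
          (infDist xbar Ω3)⁻¹ • (xbar - ω3') = 0 :=
    fun h1' h2' h3' => by
      simpa [Fin.sum_univ_three, add_assoc] using hmin.sum_inv_infDist_smul_sub_eq_zero
        (ω := ![_, _, _]) (by simp [Fin.forall_fin_succ, *]) (by simp [Fin.forall_fin_succ, *])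
  have hunit1 := norm_inv_infDist_smul_sub hout1 h1
  have hunit2 := norm_inv_infDist_smul_sub hout2 h2
  have hunit3 := norm_inv_infDist_smul_sub hout3 h3
  refine ⟨ω1, ω2, ω3,
    projSet_eq_singleton hout1 h1 fun _ h => by
      linear_combination (norm := module) hsum h h2 h3 - hsum h1 h2 h3,
    projSet_eq_singleton hout2 h2 fun _ h => by
      linear_combination (norm := module) hsum h1 h h3 - hsum h1 h2 h3,
    projSet_eq_singleton hout3 h3 fun _ h => by
      linear_combination (norm := module) hsum h1 h2 h - hsum h1 h2 h3,
    inner_eq_neg_half_of_add_add_eq_zero hunit1 hunit2 hunit3 (hsum h1 h2 h3),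
    inner_eq_neg_half_of_add_add_eq_zero hunit1 hunit3 hunit2 ?_,
    inner_eq_neg_half_of_add_add_eq_zero hunit2 hunit3 hunit1 ?_⟩
  all_goals linear_combination (norm := module) hsum h1 h2 h3

/-- Necessary optimality conditions for the generalized Fermat–Torricelli problem
with three pairwise disjoint nonconvex sets in a Hilbert space, in the case where
the local solution `x̄` lies outside all three sets: each projection set is a
singleton `{ωᵢ}`, and the unit vectors `aᵢ = (x̄ − ωᵢ)/d(x̄;Ωᵢ)` satisfy
`⟨aᵢ,aⱼ⟩ = −1/2` for `i ≠ j`. -/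
theorem fermatTorricelli_three_sets_out_case
    {X : Type*} [NormedAddCommGroup X] [InnerProductSpace ℝ X] [CompleteSpace X]
    (Ω1 Ω2 Ω3 : Set X)
    (h1ne : Ω1.Nonempty) (h2ne : Ω2.Nonempty) (h3ne : Ω3.Nonempty)
    (h1c : IsClosed Ω1) (h2c : IsClosed Ω2) (h3c : IsClosed Ω3)
    (h12 : Ω1 ∩ Ω2 = ∅) (h13 : Ω1 ∩ Ω3 = ∅) (h23 : Ω2 ∩ Ω3 = ∅)
    (xbar : X)
    (hloc : ∃ δ > (0 : ℝ), ∀ x : X, ‖x - xbar‖ < δ →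
      infDist xbar Ω1 + infDist xbar Ω2 + infDist xbar Ω3 ≤
        infDist x Ω1 + infDist x Ω2 + infDist x Ω3)
    (hout1 : xbar ∉ Ω1) (hout2 : xbar ∉ Ω2) (hout3 : xbar ∉ Ω3)
    (hproj1 : (projSet Ω1 xbar).Nonempty) (hproj2 : (projSet Ω2 xbar).Nonempty)
    (hproj3 : (projSet Ω3 xbar).Nonempty) :
    ∃ ω1 ω2 ω3 : X,
      projSet Ω1 xbar = {ω1} ∧ projSet Ω2 xbar = {ω2} ∧ projSet Ω3 xbar = {ω3} ∧
      ⟪(infDist xbar Ω1)⁻¹ • (xbar - ω1), (infDist xbar Ω2)⁻¹ • (xbar - ω2)⟫ = -(1 / 2 : ℝ) ∧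
      ⟪(infDist xbar Ω1)⁻¹ • (xbar - ω1), (infDist xbar Ω3)⁻¹ • (xbar - ω3)⟫ = -(1 / 2 : ℝ) ∧
      ⟪(infDist xbar Ω2)⁻¹ • (xbar - ω2), (infDist xbar Ω3)⁻¹ • (xbar - ω3)⟫ = -(1 / 2 : ℝ) :=
  fermatTorricelli_three_sets_out_case_general Ω1 Ω2 Ω3 xbar hloc hout1 hout2 hout3 hproj1 hproj2
    hproj3
end

section
/- Let X be a real Hilbert space, let Ω, Ω_1, …, Ω_n (n ≥ 2) be nonempty closed convex subsets of X with Ω ∩ Ω_i = ∅ for all i, let x̄ ∈ Ω, and suppose that Ω admits a tangent space at x̄, i.e., there is a linear subspace L of X with L^⊥ = N(x̄;Ω). Let a_i := (x̄ − P(x̄;Ω_i))/d(x̄;Ω_i), where P(x̄;Ω_i) denotes the unique metric projection of x̄ onto Ω_i. Then x̄ is a global optimal solution of the distance version of the generalized Heron problem if and only if Σ_{i=1}^n cos(a_i, v) = 0 for every v ∈ L \ {0}. -/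
open Set Metric Filter Asymptotics
open scoped RealInnerProductSpace

/-- The normal cone of convex analysis to a convex set `C` at `x̄ ∈ C`. -/
def convexNormalCone {X : Type*} [NormedAddCommGroup X] [InnerProductSpace ℝ X]
    (C : Set X) (xbar : X) : Set X :=
  {v | ∀ x ∈ C, ⟪v, x - xbar⟫ ≤ 0}

/-- `cos(u,v) = ⟨u,v⟩/(‖u‖·‖v‖)` for nonzero vectors. -/
noncomputable def rcos {X : Type*} [NormedAddCommGroup X] [InnerProductSpace ℝ X]
    (u v : X) : ℝ :=
  ⟪u, v⟫ / (‖u‖ * ‖v‖)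

/-!
At a point `x̄` off a convex set `K` having a nearest point `P(x̄;K)` in `K`, the distance
function `d(·;K)` is Fréchet differentiable with gradient the unit vector
`a = (x̄ − P(x̄;K)) / d(x̄;K)`: the variational inequality of the projection gives the
subgradient inequality `d(y;K) ≥ d(x̄;K) + ⟨a, y − x̄⟩`, and comparing with the distance to the
fixed point `P(x̄;K)` gives the matching quadratic upper bound. Hence `D = Σ d(·;Ωᵢ)` is
differentiable at `x̄` with gradient `s = Σ aᵢ` and also satisfies the subgradient inequality
there, so `x̄` minimises `D` on the convex set `Ω` iff `−s ∈ N(x̄;Ω) = L^⊥`, i.e. iff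
`⟨s, v⟩ = 0` on `L`; since the `aᵢ` are unit vectors, `⟨s, v⟩ / ‖v‖ = Σ cos(aᵢ, v)`.
-/

section InnerProductSpace

variable {X : Type*} [NormedAddCommGroup X] [InnerProductSpace ℝ X]

theorem norm_add_le_norm_add_inner_div_add_sq_div {u : X} (hu : u ≠ 0) (v : X) :
    ‖u + v‖ ≤ ‖u‖ + ⟪u, v⟫ / ‖u‖ + ‖v‖ ^ 2 / (2 * ‖u‖) := by
  have hu' : 0 < ‖u‖ := norm_pos_iff.2 hu
  have excess : ‖u‖ + ⟪u, v⟫ / ‖u‖ + ‖v‖ ^ 2 / (2 * ‖u‖) - ‖u + v‖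
      = (‖u + v‖ - ‖u‖) ^ 2 / (2 * ‖u‖) := by
    field_simp
    linear_combination -(norm_add_sq_real u v)
  rw [← sub_nonneg, excess]
  positivity

variable {K : Set X} {x p : X}

theorem inner_sub_le_zero_of_norm_sub_eq_infDist (hK : Convex ℝ K) (hpK : p ∈ K)
    (hp : ‖x - p‖ = infDist x K) {q : X} (hq : q ∈ K) : ⟪x - p, q - p⟫ ≤ 0 := by
  refine (norm_eq_iInf_iff_real_inner_le_zero hK hpK).1 ?_ q hq
  rw [hp, infDist_eq_iInf]
  simp only [dist_eq_norm]

theorem infDist_add_inner_le_infDist (hK : Convex ℝ K) (hpK : p ∈ K)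
    (hp : ‖x - p‖ = infDist x K) (y : X) :
    infDist x K + ⟪(infDist x K)⁻¹ • (x - p), y - x⟫ ≤ infDist y K := by
  rcases (infDist_nonneg (x := x) (s := K)).eq_or_lt with hd | hd
  · rw [← hd, inv_zero, zero_smul, inner_zero_left, add_zero]
    exact infDist_nonneg
  set d := infDist x K
  rw [real_inner_smul_left, le_infDist ⟨p, hpK⟩]
  intro q hq
  have key : d * d + ⟪x - p, y - x⟫ ≤ d * dist y q :=
    calc d * d + ⟪x - p, y - x⟫ = ⟪x - p, y - q⟫ + ⟪x - p, q - p⟫ := by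
          rw [← hp, ← real_inner_self_eq_norm_mul_norm, ← inner_add_right, ← inner_add_right]
          congr 1
          abel
      _ ≤ ‖x - p‖ * ‖y - q‖ + 0 :=
          add_le_add (real_inner_le_norm _ _)
            (inner_sub_le_zero_of_norm_sub_eq_infDist hK hpK hp hq)
      _ = d * dist y q := by rw [hp, add_zero, dist_eq_norm]
  calc d + d⁻¹ * ⟪x - p, y - x⟫ = d⁻¹ * (d * d + ⟪x - p, y - x⟫) := by field_simp
    _ ≤ d⁻¹ * (d * dist y q) := by gcongr
    _ = dist y q := inv_mul_cancel_left₀ hd.ne' _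

theorem infDist_add_le (hpK : p ∈ K) (hp : ‖x - p‖ = infDist x K) (hx : 0 < infDist x K)
    (h : X) :
    infDist (x + h) K ≤
      infDist x K + ⟪(infDist x K)⁻¹ • (x - p), h⟫ + ‖h‖ ^ 2 / (2 * infDist x K) := by
  have hxp : x - p ≠ 0 := norm_pos_iff.1 (hp ▸ hx)
  calc infDist (x + h) K ≤ ‖(x - p) + h‖ := by
        simpa [dist_eq_norm, sub_add_eq_add_sub] using infDist_le_dist_of_mem (x := x + h) hpK
    _ ≤ _ := norm_add_le_norm_add_inner_div_add_sq_div hxp h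
    _ = _ := by rw [hp, real_inner_smul_left, div_eq_inv_mul]

theorem hasFDerivAt_infDist (hK : Convex ℝ K) (hpK : p ∈ K) (hp : ‖x - p‖ = infDist x K)
    (hx : 0 < infDist x K) :
    HasFDerivAt (fun y => infDist y K) (innerSL ℝ ((infDist x K)⁻¹ • (x - p))) x := by
  rw [hasFDerivAt_iff_isLittleO_nhds_zero]
  refine IsBigO.trans_isLittleO ?_ (isLittleO_norm_pow_id one_lt_two)
  refine IsBigO.of_bound (2 * infDist x K)⁻¹ (Eventually.of_forall fun h => ?_)
  have lower := infDist_add_inner_le_infDist hK hpK hp (x + h)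
  have upper := infDist_add_le hpK hp hx h
  rw [add_sub_cancel_left] at lower
  rw [innerSL_apply_apply, Real.norm_eq_abs, abs_of_nonneg (by linarith), norm_pow, norm_norm,
    inv_mul_eq_div]
  linarith

theorem isMinOn_iff_forall_inner_nonneg {Ω : Set X} {f : X → ℝ} {g : X} (hΩ : Convex ℝ Ω)
    (hx : x ∈ Ω) (hf : HasFDerivAt f (innerSL ℝ g) x) (hsub : ∀ y, f x + ⟪g, y - x⟫ ≤ f y) :
    IsMinOn f Ω x ↔ ∀ y ∈ Ω, 0 ≤ ⟪g, y - x⟫ := by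
  refine ⟨fun hmin y hy => ?_, fun h => isMinOn_iff.2 fun y hy => by linarith [hsub y, h y hy]⟩
  simpa using hmin.localize.hasFDerivWithinAt_nonneg hf.hasFDerivWithinAt
    (sub_mem_posTangentConeAt_of_segment_subset (hΩ.segment_subset hx hy))

theorem forall_inner_nonneg_iff_of_orthogonal_eq_convexNormalCone {Ω : Set X}
    {L : Submodule ℝ X} (hL : {v : X | ∀ u ∈ L, ⟪v, u⟫ = 0} = convexNormalCone Ω x) (s : X) :
    (∀ y ∈ Ω, 0 ≤ ⟪s, y - x⟫) ↔ ∀ v ∈ L, ⟪s, v⟫ = 0 := by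
  have h := Set.ext_iff.1 hL (-s)
  simp only [convexNormalCone, mem_ofPred_eq, inner_neg_left, neg_eq_zero, neg_nonpos] at h
  exact h.symm

theorem sum_rcos_of_norm_eq_one {ι : Type*} (t : Finset ι) {a : ι → X} (ha : ∀ i, ‖a i‖ = 1)
    (v : X) : ∑ i ∈ t, rcos (a i) v = ⟪∑ i ∈ t, a i, v⟫ / ‖v‖ := by
  simp [rcos, ha, sum_inner, Finset.sum_div]

end InnerProductSpace

theorem heron_tangent_space_characterization_general
    {X : Type*} [NormedAddCommGroup X] [InnerProductSpace ℝ X]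
    (n : ℕ)
    (Ω : Set X) (hΩconv : Convex ℝ Ω)
    (Ωi : Fin n → Set X)
    (hΩiconv : ∀ i, Convex ℝ (Ωi i))
    (hdisj : ∀ i, Ω ∩ Ωi i = ∅)
    (xbar : X) (hxbar : xbar ∈ Ω)
    (L : Submodule ℝ X)
    (hL : {v : X | ∀ u ∈ L, ⟪v, u⟫ = 0} = convexNormalCone Ω xbar)
    (p : Fin n → X) (hp : ∀ i, p i ∈ Ωi i ∧ ‖xbar - p i‖ = infDist xbar (Ωi i))
    (a : Fin n → X) (ha : ∀ i, a i = (infDist xbar (Ωi i))⁻¹ • (xbar - p i)) :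
    (∀ x ∈ Ω, ∑ i, infDist xbar (Ωi i) ≤ ∑ i, infDist x (Ωi i)) ↔
      ∀ v ∈ L, v ≠ 0 → ∑ i, rcos (a i) v = 0 := by
  have hpos : ∀ i, 0 < infDist xbar (Ωi i) := fun i => by
    rw [← (hp i).2, norm_pos_iff, sub_ne_zero]
    rintro rfl
    exact (hdisj i).subset ⟨hxbar, (hp i).1⟩
  have hunit : ∀ i, ‖a i‖ = 1 := fun i => by
    rw [ha i, norm_smul, (hp i).2, norm_inv, Real.norm_of_nonneg (hpos i).le,
      inv_mul_cancel₀ (hpos i).ne']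
  have hgrad : HasFDerivAt (fun y => ∑ i, infDist y (Ωi i)) (innerSL ℝ (∑ i, a i)) xbar := by
    rw [map_sum]
    exact HasFDerivAt.fun_sum fun i _ =>
      ha i ▸ hasFDerivAt_infDist (hΩiconv i) (hp i).1 (hp i).2 (hpos i)
  have hsub : ∀ y, ∑ i, infDist xbar (Ωi i) + ⟪∑ i, a i, y - xbar⟫ ≤ ∑ i, infDist y (Ωi i) := by
    intro y
    rw [sum_inner, ← Finset.sum_add_distrib]
    exact Finset.sum_le_sum fun i _ =>
      ha i ▸ infDist_add_inner_le_infDist (hΩiconv i) (hp i).1 (hp i).2 y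
  have hmin := isMinOn_iff_forall_inner_nonneg hΩconv hxbar hgrad hsub
  rw [isMinOn_iff] at hmin
  rw [hmin, forall_inner_nonneg_iff_of_orthogonal_eq_convexNormalCone hL]
  simp only [sum_rcos_of_norm_eq_one _ hunit, div_eq_zero_iff, norm_eq_zero]
  refine forall₂_congr fun v _ => ?_
  by_cases hv : v = 0 <;> simp [hv]

/-- Characterization of optimal solutions to the generalized Heron problem with
convex data in a Hilbert space when the constraint set `Ω` admits a tangent space
`L` at `x̄` (i.e. `L^⊥ = N(x̄;Ω)`): `x̄` is a global optimal solution iff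
`Σᵢ cos(aᵢ, v) = 0` for every nonzero `v ∈ L`, where
`aᵢ = (x̄ − P(x̄;Ωᵢ))/d(x̄;Ωᵢ)`. -/
theorem heron_tangent_space_characterization
    {X : Type*} [NormedAddCommGroup X] [InnerProductSpace ℝ X] [CompleteSpace X]
    (n : ℕ) (hn : 2 ≤ n)
    (Ω : Set X) (hΩne : Ω.Nonempty) (hΩc : IsClosed Ω) (hΩconv : Convex ℝ Ω)
    (Ωi : Fin n → Set X) (hΩine : ∀ i, (Ωi i).Nonempty) (hΩic : ∀ i, IsClosed (Ωi i))
    (hΩiconv : ∀ i, Convex ℝ (Ωi i))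
    (hdisj : ∀ i, Ω ∩ Ωi i = ∅)
    (xbar : X) (hxbar : xbar ∈ Ω)
    (L : Submodule ℝ X)
    (hL : {v : X | ∀ u ∈ L, ⟪v, u⟫ = 0} = convexNormalCone Ω xbar)
    (p : Fin n → X) (hp : ∀ i, p i ∈ Ωi i ∧ ‖xbar - p i‖ = infDist xbar (Ωi i))
    (a : Fin n → X) (ha : ∀ i, a i = (infDist xbar (Ωi i))⁻¹ • (xbar - p i)) :
    (∀ x ∈ Ω, ∑ i, infDist xbar (Ωi i) ≤ ∑ i, infDist x (Ωi i)) ↔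
      ∀ v ∈ L, v ≠ 0 → ∑ i, rcos (a i) v = 0 :=
  heron_tangent_space_characterization_general n Ω hΩconv Ωi hΩiconv hdisj xbar hxbar L hL p hp a ha
end

section
/- Let X be a real Hilbert space and let Ω, Ω_1, Ω_2 be nonempty closed subsets of X with Ω ∩ Ω_1 = ∅ and Ω ∩ Ω_2 = ∅. Let x̄ ∈ Ω be a local optimal solution of the problem: minimize d(x;Ω_1) + d(x;Ω_2) subject to x ∈ Ω. Suppose that N̂(x̄;Ω) = span{v} for some v ≠ 0 and that Π(x̄;Ω_i) ≠ ∅ for i = 1, 2. Then for any choice of projections ω_i ∈ Π(x̄;Ω_i), the unit vectors a_i := (x̄ − ω_i)/d(x̄;Ω_i) satisfy: either a_1 + a_2 = 0, or cos(a_1, v) = cos(a_2, v). -/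
open Set Metric
open scoped RealInnerProductSpace

/-- The Fréchet (regular) normal cone to `Ω` at `x̄ ∈ Ω`. -/
def frechetNormalCone {X : Type*} [NormedAddCommGroup X] [InnerProductSpace ℝ X]
    (Ω : Set X) (xbar : X) : Set X :=
  {v | ∀ ε > (0 : ℝ), ∃ δ > (0 : ℝ), ∀ x ∈ Ω, ‖x - xbar‖ < δ →
    ⟪v, x - xbar⟫ ≤ ε * ‖x - xbar‖}

/-!
The distance to `Ωᵢ` is at most the distance to the fixed projection `ωᵢ`, and by
AM-GM the norm admits the quadratic upper bound
`‖u + h‖ ≤ ‖u‖ + ⟪u/‖u‖, h⟫ + ‖h‖²/(2‖u‖)`. So the objective has the upper quadratic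
support `x ↦ f(x̄) + ⟪a₁ + a₂, x - x̄⟫ + C‖x - x̄‖²`, and local minimality of `x̄` on `Ω`
puts `-(a₁ + a₂)` into `N̂(x̄;Ω) = span{v}`. For the unit vectors `a₁, a₂` we have
`⟪a₁, a₁ + a₂⟫ = ⟪a₂, a₁ + a₂⟫`, so if `a₁ + a₂ = t v` with `t ≠ 0` then
`⟪a₁, v⟫ = ⟪a₂, v⟫`.
-/

open Topology

section

variable {X : Type*} [NormedAddCommGroup X] [InnerProductSpace ℝ X]

theorem norm_add_le_norm_add_inner_add_sq {u : X} (hu : u ≠ 0) (h : X) :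
    ‖u + h‖ ≤ ‖u‖ + ⟪‖u‖⁻¹ • u, h⟫ + (2 * ‖u‖)⁻¹ * ‖h‖ ^ 2 := by
  have hpos : 0 < ‖u‖ := norm_pos_iff.mpr hu
  have hsq : 2 * ‖u‖ * ‖u + h‖ ≤ 2 * ‖u‖ ^ 2 + 2 * ⟪u, h⟫ + ‖h‖ ^ 2 := by
    nlinarith [sq_nonneg (‖u + h‖ - ‖u‖), norm_add_sq_real u h]
  have hrhs : ‖u‖ + ⟪‖u‖⁻¹ • u, h⟫ + (2 * ‖u‖)⁻¹ * ‖h‖ ^ 2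
      = (2 * ‖u‖ ^ 2 + 2 * ⟪u, h⟫ + ‖h‖ ^ 2) / (2 * ‖u‖) := by
    rw [real_inner_smul_left]
    field_simp
  rw [hrhs, le_div_iff₀ (by positivity)]
  linarith

theorem infDist_le_add_inner_add_sq {Q : Set X} {x ω : X} (hω : ω ∈ projSet Q x)
    (hx : x ≠ ω) (y : X) :
    infDist y Q ≤ infDist x Q + ⟪(infDist x Q)⁻¹ • (x - ω), y - x⟫
      + (2 * infDist x Q)⁻¹ * ‖y - x‖ ^ 2 := by
  rw [← hω.2]
  calc infDist y Q ≤ ‖y - ω‖ := by rw [← dist_eq_norm]; exact infDist_le_dist_of_mem hω.1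
    _ = ‖(x - ω) + (y - x)‖ := by rw [sub_add_sub_cancel']
    _ ≤ _ := norm_add_le_norm_add_inner_add_sq (sub_ne_zero.mpr hx) (y - x)

theorem mem_frechetNormalCone_of_eventually_inner_le {Ω : Set X} {xbar v : X} (C : ℝ)
    (h : ∀ᶠ x in 𝓝[Ω] xbar, ⟪v, x - xbar⟫ ≤ C * ‖x - xbar‖ ^ 2) :
    v ∈ frechetNormalCone Ω xbar := by
  intro ε hε
  obtain ⟨δ, hδ, hball⟩ := Metric.mem_nhdsWithin_iff.mp h
  refine ⟨min δ (ε / (|C| + 1)), by positivity, fun x hx hxδ => ?_⟩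
  set r := ‖x - xbar‖
  have hr : (|C| + 1) * r ≤ ε := by
    rw [← le_div_iff₀' (by positivity)]
    exact hxδ.le.trans (min_le_right _ _)
  have hxball : x ∈ ball xbar δ := by
    rw [mem_ball, dist_eq_norm]; exact hxδ.trans_le (min_le_left _ _)
  calc ⟪v, x - xbar⟫ ≤ C * r ^ 2 := hball ⟨hxball, hx⟩
    _ ≤ ((|C| + 1) * r) * r := by nlinarith [le_abs_self C, norm_nonneg (x - xbar)]
    _ ≤ ε * r := by gcongr

theorem neg_mem_frechetNormalCone_of_isLocalMinOn {f : X → ℝ} {Ω : Set X} {xbar g : X}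
    (C : ℝ) (hmin : IsLocalMinOn f Ω xbar)
    (hf : ∀ x, f x ≤ f xbar + ⟪g, x - xbar⟫ + C * ‖x - xbar‖ ^ 2) :
    -g ∈ frechetNormalCone Ω xbar := by
  refine mem_frechetNormalCone_of_eventually_inner_le C ?_
  filter_upwards [hmin] with x hx
  rw [inner_neg_left]
  linarith [hf x]

theorem add_eq_zero_or_rcos_eq_of_add_mem_span {a1 a2 v : X} (hnorm : ‖a1‖ = ‖a2‖)
    (hspan : a1 + a2 ∈ Submodule.span ℝ {v}) : a1 + a2 = 0 ∨ rcos a1 v = rcos a2 v := by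
  obtain ⟨t, ht⟩ := Submodule.mem_span_singleton.mp hspan
  rcases eq_or_ne t 0 with rfl | ht0
  · left
    rw [← ht, zero_smul]
  · right
    have hsum : ⟪a1, a1 + a2⟫ = ⟪a2, a1 + a2⟫ := by
      rw [inner_add_right, inner_add_right, real_inner_self_eq_norm_sq,
        real_inner_self_eq_norm_sq, hnorm, real_inner_comm]
      ring
    rw [← ht, real_inner_smul_right, real_inner_smul_right] at hsum
    rw [rcos, rcos, mul_left_cancel₀ ht0 hsum, hnorm]

end

theorem heron_two_sets_necessary_general
    {X : Type*} [NormedAddCommGroup X] [InnerProductSpace ℝ X]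
    (Ω Ω1 Ω2 : Set X)
    (hd1 : Ω ∩ Ω1 = ∅) (hd2 : Ω ∩ Ω2 = ∅)
    (xbar : X) (hxbar : xbar ∈ Ω)
    (hloc : ∃ δ > (0 : ℝ), ∀ x ∈ Ω, ‖x - xbar‖ < δ →
      infDist xbar Ω1 + infDist xbar Ω2 ≤ infDist x Ω1 + infDist x Ω2)
    (v : X)
    (hN : frechetNormalCone Ω xbar = (Submodule.span ℝ {v} : Set X))
    (ω1 : X) (hω1 : ω1 ∈ projSet Ω1 xbar) (ω2 : X) (hω2 : ω2 ∈ projSet Ω2 xbar)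
    (a1 a2 : X)
    (ha1 : a1 = (infDist xbar Ω1)⁻¹ • (xbar - ω1))
    (ha2 : a2 = (infDist xbar Ω2)⁻¹ • (xbar - ω2)) :
    a1 + a2 = 0 ∨ rcos a1 v = rcos a2 v := by
  have hne1 : xbar ≠ ω1 := fun h => hd1.subset ⟨hxbar, h ▸ hω1.1⟩
  have hne2 : xbar ≠ ω2 := fun h => hd2.subset ⟨hxbar, h ▸ hω2.1⟩
  have hmin : IsLocalMinOn (fun x => infDist x Ω1 + infDist x Ω2) Ω xbar := by
    obtain ⟨δ, hδ, hopt⟩ := hloc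
    exact Metric.mem_nhdsWithin_iff.mpr ⟨δ, hδ, fun x ⟨hxδ, hx⟩ =>
      hopt x hx (by rwa [mem_ball, dist_eq_norm] at hxδ)⟩
  have hnormal := neg_mem_frechetNormalCone_of_isLocalMinOn (g := a1 + a2)
    ((2 * infDist xbar Ω1)⁻¹ + (2 * infDist xbar Ω2)⁻¹) hmin fun x => by
      have h1 := infDist_le_add_inner_add_sq hω1 hne1 x
      have h2 := infDist_le_add_inner_add_sq hω2 hne2 x
      rw [ha1, ha2, inner_add_left]
      linarith
  rw [hN, SetLike.mem_coe, Submodule.neg_mem_iff] at hnormal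
  refine add_eq_zero_or_rcos_eq_of_add_mem_span ?_ hnormal
  rw [ha1, ha2, ← hω1.2, ← hω2.2]
  simp [norm_smul, sub_ne_zero.mpr hne1, sub_ne_zero.mpr hne2]

/-- Necessary conditions for the generalized Heron problem with two nonconvex sets
in a Hilbert space when `N̂(x̄;Ω) = span{v}`: either `a₁ + a₂ = 0` or
`cos(a₁,v) = cos(a₂,v)`, where `aᵢ = (x̄ − ωᵢ)/d(x̄;Ωᵢ)`. -/
theorem heron_two_sets_necessary
    {X : Type*} [NormedAddCommGroup X] [InnerProductSpace ℝ X] [CompleteSpace X]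
    (Ω Ω1 Ω2 : Set X)
    (hΩne : Ω.Nonempty) (h1ne : Ω1.Nonempty) (h2ne : Ω2.Nonempty)
    (hΩc : IsClosed Ω) (h1c : IsClosed Ω1) (h2c : IsClosed Ω2)
    (hd1 : Ω ∩ Ω1 = ∅) (hd2 : Ω ∩ Ω2 = ∅)
    (xbar : X) (hxbar : xbar ∈ Ω)
    (hloc : ∃ δ > (0 : ℝ), ∀ x ∈ Ω, ‖x - xbar‖ < δ →
      infDist xbar Ω1 + infDist xbar Ω2 ≤ infDist x Ω1 + infDist x Ω2)
    (v : X) (hv : v ≠ 0)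
    (hN : frechetNormalCone Ω xbar = (Submodule.span ℝ {v} : Set X))
    (hproj1 : (projSet Ω1 xbar).Nonempty) (hproj2 : (projSet Ω2 xbar).Nonempty)
    (ω1 : X) (hω1 : ω1 ∈ projSet Ω1 xbar) (ω2 : X) (hω2 : ω2 ∈ projSet Ω2 xbar)
    (a1 a2 : X)
    (ha1 : a1 = (infDist xbar Ω1)⁻¹ • (xbar - ω1))
    (ha2 : a2 = (infDist xbar Ω2)⁻¹ • (xbar - ω2)) :
    a1 + a2 = 0 ∨ rcos a1 v = rcos a2 v :=
  heron_two_sets_necessary_general Ω Ω1 Ω2 hd1 hd2 xbar hxbar hloc v hN ω1 hω1 ω2 hω2 a1 a2 ha1 ha2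
end
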